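/- For every n with 2 ≤ n ≤ N + 1, the Prüfer angle E ↦ φ_n(E) is a continuously differentiable and strictly increasing function of E on all of ℝ. -/

import Mathlib

/-!
If `tan φ_n = u_n / u_{n-1}` for a solution of `u_{n+1} = (E - ε_n) u_n - u_{n-1}`, the step
`φ_n ↦ φ_{n+1}` lifts to `ℝ` the action on directions of the transfer matrix
`(x, y) ↦ (y, t y - x)`, `t = E - ε_n`. Measuring the turning angle by a complex argument gives a
closed form `pruferMap t φ` of the step which is smooth in `(t, φ)`, because that complex number
never lies on `(-∞, 0]`. Off the zeros of `sin` the step is `arctan (t - cot φ) + kπ`, so it is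
nondecreasing in `t` and its `φ`-derivative equals `1 / (sin² φ + (t sin φ - cos φ)²)` on a dense
set, hence everywhere by continuity; in particular it is strictly increasing in `φ`. Since
`φ_2(E) = arctan (E - ε_1)`, induction on `n` concludes.
-/

/-- One step of the Prüfer angle recursion: if `φ = kπ` (i.e. `sin φ = 0`) the next
angle is `(k − 1/2)π = φ − π/2`; otherwise, with `k = ⌊φ/π⌋` the unique integer with
`kπ < φ < (k+1)π`, the next angle is `arctan(E − e − cot φ) + kπ`. -/
noncomputable def pruferStep (e E φ : ℝ) : ℝ :=
  if Real.sin φ = 0 then φ - Real.pi / 2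
  else Real.arctan (E - e - Real.cos φ / Real.sin φ) + Real.pi * ((⌊φ / Real.pi⌋ : ℤ) : ℝ)

/-- The Prüfer angles: `φ_1(E) = π/2` and `φ_{n+1}(E) = pruferStep (ε n) E (φ_n(E))`
for `n ≥ 1`.  (The value at index `0` is junk, set to `π/2`.) -/
noncomputable def prufer (ε : ℕ → ℝ) (E : ℝ) : ℕ → ℝ
  | 0 => Real.pi / 2
  | 1 => Real.pi / 2
  | n + 2 => pruferStep (ε (n + 1)) E (prufer ε E (n + 1))

open Real Topology

lemma Complex.contDiffAt_arg {z : ℂ} (hz : z ∈ Complex.slitPlane) {n : WithTop ℕ∞} :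
    ContDiffAt ℝ n Complex.arg z := by
  have h : Complex.arg = fun w => (Complex.log w).im := funext fun w => (Complex.log_im w).symm
  rw [h]
  exact Complex.imCLM.contDiff.contDiffAt.comp z ((Complex.contDiffAt_log hz).restrict_scalars ℝ)

lemma cos_div_sin_add_int_mul_pi (x : ℝ) (k : ℤ) :
    cos (x + k * π) / sin (x + k * π) = cos x / sin x := by
  rw [sin_add_int_mul_pi, cos_add_int_mul_pi,
    mul_div_mul_left _ _ (zpow_ne_zero k (neg_ne_zero.2 one_ne_zero))]

lemma sub_int_mul_pi_mem_Ioo {φ : ℝ} {k : ℤ} (hφ : φ ∈ Set.Ioo (k * π) (k * π + π)) :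
    φ - k * π ∈ Set.Ioo 0 π :=
  ⟨by linarith [hφ.1], by linarith [hφ.2]⟩

lemma sin_ne_zero_of_mem_Ioo {φ : ℝ} {k : ℤ} (hφ : φ ∈ Set.Ioo (k * π) (k * π + π)) :
    sin φ ≠ 0 := by
  have hψ := sub_int_mul_pi_mem_Ioo hφ
  rw [← sub_add_cancel φ (k * π), sin_add_int_mul_pi]
  exact mul_ne_zero (zpow_ne_zero k (neg_ne_zero.2 one_ne_zero))
    (sin_pos_of_pos_of_lt_pi hψ.1 hψ.2).ne'

lemma mem_Ioo_floor_of_sin_ne_zero {φ : ℝ} (hφ : sin φ ≠ 0) :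
    φ ∈ Set.Ioo (⌊φ / π⌋ * π) (⌊φ / π⌋ * π + π) := by
  have hfloor : (⌊φ / π⌋ : ℝ) * π ≠ φ := sin_ne_zero_iff.1 hφ _
  refine ⟨lt_of_le_of_ne ?_ hfloor, ?_⟩
  · rw [← le_div_iff₀ pi_pos]; exact Int.floor_le _
  · rw [← add_one_mul, ← div_lt_iff₀ pi_pos]; exact Int.lt_floor_add_one _

lemma dense_setOf_sin_ne_zero : Dense {x : ℝ | sin x ≠ 0} := by
  have hcount : {x : ℝ | sin x = 0}.Countable :=
    (Set.countable_range fun k : ℤ => (k : ℝ) * π).mono fun _ hx => sin_eq_zero_iff.1 hx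
  exact hcount.dense_compl ℝ

lemma sin_sq_add_mul_sin_sub_cos_sq_pos (t φ : ℝ) : 0 < sin φ ^ 2 + (t * sin φ - cos φ) ^ 2 := by
  by_cases h : sin φ = 0
  · have hc : cos φ ^ 2 = 1 := by rw [← sin_sq_add_cos_sq φ, h]; ring
    rw [h]; nlinarith
  · positivity

lemma pruferStep_of_mem_Ioo (e E : ℝ) {φ : ℝ} {k : ℤ}
    (hφ : φ ∈ Set.Ioo (k * π) (k * π + π)) :
    pruferStep e E φ = arctan (E - e - cos φ / sin φ) + k * π := by
  have hk : ⌊φ / π⌋ = k := by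
    rw [Int.floor_eq_iff, le_div_iff₀ pi_pos, div_lt_iff₀ pi_pos, add_one_mul]
    exact ⟨hφ.1.le, hφ.2⟩
  rw [pruferStep, if_neg (sin_ne_zero_of_mem_Ioo hφ), hk, mul_comm π]

/-- `i e^{-iφ} (sin φ + i (t sin φ - cos φ))`: the image of `e^{iφ}` under the transfer
matrix, turned back through `φ` and then forward through a quarter turn. -/
noncomputable def pruferRotation (t φ : ℝ) : ℂ :=
  ⟨1 - t * sin φ * cos φ, t * sin φ ^ 2⟩

lemma pruferRotation_mem_slitPlane (t φ : ℝ) : pruferRotation t φ ∈ Complex.slitPlane := by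
  rw [Complex.mem_slitPlane_iff]
  by_cases h : t * sin φ ^ 2 = 0
  · left
    have : t * sin φ = 0 := by
      rcases mul_eq_zero.1 h with h | h
      · simp [h]
      · simp [pow_eq_zero_iff two_ne_zero |>.1 h]
    simp [pruferRotation, this]
  · exact Or.inr h

lemma contDiff_pruferRotation {n : WithTop ℕ∞} :
    ContDiff ℝ n fun p : ℝ × ℝ => pruferRotation p.1 p.2 :=
  Complex.equivRealProdCLM.symm.contDiff.comp
    (f := fun p : ℝ × ℝ => (1 - p.1 * sin p.2 * cos p.2, p.1 * sin p.2 ^ 2)) (by fun_prop)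

noncomputable def pruferMap (t φ : ℝ) : ℝ :=
  φ - π / 2 + (pruferRotation t φ).arg

lemma contDiff_pruferMap {n : WithTop ℕ∞} : ContDiff ℝ n fun p : ℝ × ℝ => pruferMap p.1 p.2 :=
  contDiff_iff_contDiffAt.2 fun p =>
    (contDiff_snd.sub contDiff_const).contDiffAt.add
      ((Complex.contDiffAt_arg (pruferRotation_mem_slitPlane p.1 p.2)).comp (g := Complex.arg) p
        contDiff_pruferRotation.contDiffAt)

lemma pruferMap_add_int_mul_pi (t φ : ℝ) (k : ℤ) :
    pruferMap t (φ + k * π) = pruferMap t φ + k * π := by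
  have hsq : ((-1 : ℝ) ^ k) ^ 2 = 1 := by rw [← sq_abs, abs_neg_one_zpow, one_pow]
  have hrot : pruferRotation t (φ + k * π) = pruferRotation t φ := by
    simp only [pruferRotation, sin_add_int_mul_pi, cos_add_int_mul_pi]
    congr 1
    · linear_combination (-t * sin φ * cos φ) * hsq
    · linear_combination t * sin φ ^ 2 * hsq
  rw [pruferMap, pruferMap, hrot]
  ring

lemma pruferMap_of_mem_Ioo_zero_pi (t : ℝ) {ψ : ℝ} (hψ : ψ ∈ Set.Ioo 0 π) :
    pruferMap t ψ = arctan (t - cos ψ / sin ψ) := by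
  have hs : 0 < sin ψ := sin_pos_of_pos_of_lt_pi hψ.1 hψ.2
  set u := t - cos ψ / sin ψ with hu
  have hθ : arctan u + (π / 2 - ψ) ∈ Set.Ioc (-π) π := by
    constructor <;> linarith [neg_pi_div_two_lt_arctan u, arctan_lt_pi_div_two u, hψ.1, hψ.2]
  have hr : 0 < sin ψ * √(1 + u ^ 2) := by positivity
  have hz : pruferRotation t ψ = ↑(sin ψ * √(1 + u ^ 2)) *
      (↑(cos (arctan u + (π / 2 - ψ))) + ↑(sin (arctan u + (π / 2 - ψ))) * Complex.I) := by
    have hsc := sin_sq_add_cos_sq ψ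
    have hus : u * sin ψ = t * sin ψ - cos ψ := by rw [hu]; field_simp
    clear_value u
    apply Complex.ext <;>
      simp only [pruferRotation, cos_add, sin_add, cos_pi_div_two_sub, sin_pi_div_two_sub,
        cos_arctan, sin_arctan, Complex.mul_re, Complex.mul_im, Complex.add_re, Complex.add_im,
        Complex.ofReal_re, Complex.ofReal_im, Complex.I_re, Complex.I_im] <;>
      field_simp
    · linear_combination (-√(1 + u ^ 2)) * hsc + √(1 + u ^ 2) * cos ψ * hus
    · linear_combination (-√(1 + u ^ 2)) * sin ψ * hus
  rw [pruferMap, hz, Complex.ofReal_cos, Complex.ofReal_sin,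
    Complex.arg_mul_cos_add_sin_mul_I hr hθ]
  ring

lemma pruferMap_of_mem_Ioo (t : ℝ) {φ : ℝ} {k : ℤ} (hφ : φ ∈ Set.Ioo (k * π) (k * π + π)) :
    pruferMap t φ = arctan (t - cos φ / sin φ) + k * π := by
  rw [← sub_add_cancel φ (k * π), pruferMap_add_int_mul_pi, cos_div_sin_add_int_mul_pi,
    pruferMap_of_mem_Ioo_zero_pi t (sub_int_mul_pi_mem_Ioo hφ)]

lemma pruferStep_eq_pruferMap (e E φ : ℝ) : pruferStep e E φ = pruferMap (E - e) φ := by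
  by_cases hφ : sin φ = 0
  · have hrot : pruferRotation (E - e) φ = 1 :=
      Complex.ext (by simp [pruferRotation, hφ]) (by simp [pruferRotation, hφ])
    rw [pruferStep, if_pos hφ, pruferMap, hrot, Complex.arg_one, add_zero]
  · have hmem := mem_Ioo_floor_of_sin_ne_zero hφ
    rw [pruferStep_of_mem_Ioo e E hmem, pruferMap_of_mem_Ioo _ hmem, sub_sub]

lemma hasDerivAt_pruferMap (t : ℝ) {φ : ℝ} (hφ : sin φ ≠ 0) :
    HasDerivAt (pruferMap t) (1 / (sin φ ^ 2 + (t * sin φ - cos φ) ^ 2)) φ := by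
  have hmem := mem_Ioo_floor_of_sin_ne_zero hφ
  have hloc : pruferMap t =ᶠ[𝓝 φ] fun x => arctan (t - cos x / sin x) + ⌊φ / π⌋ * π := by
    filter_upwards [isOpen_Ioo.mem_nhds hmem] with x hx using pruferMap_of_mem_Ioo t hx
  have hderiv := ((hasDerivAt_arctan _).comp φ ((hasDerivAt_const φ t).sub
    ((hasDerivAt_cos φ).div (hasDerivAt_sin φ) hφ))).add_const (⌊φ / π⌋ * π : ℝ)
  refine (hderiv.congr_of_eventuallyEq hloc).congr_deriv ?_
  have hsc := sin_sq_add_cos_sq φ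
  simp only [Pi.sub_apply, Pi.div_apply]
  field_simp
  linear_combination hsc

lemma deriv_pruferMap (t : ℝ) :
    deriv (pruferMap t) = fun φ => 1 / (sin φ ^ 2 + (t * sin φ - cos φ) ^ 2) := by
  have hcont : ContDiff ℝ 1 (pruferMap t) :=
    contDiff_pruferMap.comp (contDiff_const.prodMk contDiff_id)
  refine Continuous.ext_on dense_setOf_sin_ne_zero (hcont.continuous_deriv le_rfl) ?_
    fun φ hφ => (hasDerivAt_pruferMap t hφ).deriv
  exact continuous_const.div (by fun_prop) fun φ => (sin_sq_add_mul_sin_sub_cos_sq_pos t φ).ne'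

lemma strictMono_pruferMap (t : ℝ) : StrictMono (pruferMap t) :=
  strictMono_of_deriv_pos fun φ => by
    rw [deriv_pruferMap]
    exact one_div_pos.2 (sin_sq_add_mul_sin_sub_cos_sq_pos t φ)

lemma monotone_pruferMap_left (φ : ℝ) : Monotone fun t => pruferMap t φ := by
  have h : ∀ t, pruferMap t φ = pruferStep 0 t φ := fun t => by
    rw [pruferStep_eq_pruferMap, sub_zero]
  intro a b hab
  simp only [h, pruferStep]
  split_ifs
  · exact le_rfl
  · gcongr

lemma StrictMono.pruferMap_sub {g : ℝ → ℝ} (hg : StrictMono g) (e : ℝ) :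
    StrictMono fun E => pruferMap (E - e) (g E) := fun a b hab =>
  calc pruferMap (a - e) (g a) ≤ pruferMap (b - e) (g a) := monotone_pruferMap_left _ (by linarith)
    _ < pruferMap (b - e) (g b) := strictMono_pruferMap _ (hg hab)

lemma prufer_succ (ε : ℕ → ℝ) (E : ℝ) {n : ℕ} (hn : n ≠ 0) :
    prufer ε E (n + 1) = pruferMap (E - ε n) (prufer ε E n) := by
  obtain ⟨k, rfl⟩ := Nat.exists_eq_succ_of_ne_zero hn
  exact pruferStep_eq_pruferMap _ _ _

lemma prufer_two (ε : ℕ → ℝ) (E : ℝ) : prufer ε E 2 = arctan (E - ε 1) := by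
  have hmem : π / 2 ∈ Set.Ioo (((0 : ℤ) : ℝ) * π) ((0 : ℤ) * π + π) := by
    constructor <;> linarith [pi_pos]
  rw [show prufer ε E 2 = pruferStep (ε 1) E (π / 2) from rfl, pruferStep_of_mem_Ioo _ _ hmem]
  simp

lemma contDiff_prufer (ε : ℕ → ℝ) {n : WithTop ℕ∞} (m : ℕ) :
    ContDiff ℝ n fun E => prufer ε E m := by
  induction m with
  | zero => exact contDiff_const
  | succ m ih =>
    rcases Nat.eq_zero_or_pos m with rfl | hm
    · exact contDiff_const
    · simp only [prufer_succ ε _ hm.ne']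
      exact contDiff_pruferMap.comp ((contDiff_id.sub contDiff_const).prodMk ih)

lemma strictMono_prufer (ε : ℕ → ℝ) {m : ℕ} (hm : 2 ≤ m) : StrictMono fun E => prufer ε E m := by
  induction m, hm using Nat.le_induction with
  | base =>
    simp only [prufer_two]
    exact arctan_strictMono.comp fun a b h => sub_lt_sub_right h _
  | succ m hm ih =>
    simp only [prufer_succ ε _ (by omega : m ≠ 0)]
    exact ih.pruferMap_sub _

theorem prufer_contDiff_strictMono_general
    (N : ℕ)
    (ε : ℕ → ℝ) :
    ∀ n : ℕ, 2 ≤ n → n ≤ N + 1 →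
      ContDiff ℝ 1 (fun E : ℝ => prufer ε E n) ∧
      StrictMono (fun E : ℝ => prufer ε E n) :=
  fun n hn _ => ⟨contDiff_prufer ε n, strictMono_prufer ε hn⟩

/-- For every `2 ≤ n ≤ N + 1`, the Prüfer angle `E ↦ φ_n(E)` is a continuously
differentiable and strictly increasing function of `E` on all of `ℝ`. -/
theorem prufer_contDiff_strictMono
    (N : ℕ) (hN : 1 ≤ N) (W : ℝ) (hW : 0 ≤ W)
    (ε : ℕ → ℝ) (hε : ∀ n, 1 ≤ n → n ≤ N → ε n ∈ Set.Icc 0 W) :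
    ∀ n : ℕ, 2 ≤ n → n ≤ N + 1 →
      ContDiff ℝ 1 (fun E : ℝ => prufer ε E n) ∧
      StrictMono (fun E : ℝ => prufer ε E n) :=
  prufer_contDiff_strictMono_general N ε
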